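/- arXiv:1601.04274 — 3 statements merged into one kernel-verified Lean document; each statement's English description precedes it below -/
import Mathlib

section
/- Let ξ₁, ξ₂, … be i.i.d. strictly positive random variables with partial sums Sₙ, let ν(t) = #{k ≥ 0 : S_k ≤ t}, and let G : [0,∞) → [0,∞) be locally bounded and nonincreasing. Then for every integer l ≥ 1 there is a constant C such that for all sufficiently large t, E[(Σ_{k≥0} G(t - S_k) 1{S_k ≤ t})^l] ≤ C · (∫₀^t G(y) dy + 1)^l. -/
open MeasureTheory ProbabilityTheory Filter Set
open scoped ENNReal

noncomputable def partialSum {Ω : Type*} (ξ : ℕ → Ω → ℝ) (n : ℕ) (ω : Ω) : ℝ :=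
  ∑ i ∈ Finset.range n, ξ i ω

/-- The shot-noise sum `∑_{k≥0} G(t - S_k) 1{S_k ≤ t}`, as an `ℝ≥0∞`-valued sum. -/
noncomputable def shotSum {Ω : Type*} (G : ℝ → ℝ) (ξ : ℕ → Ω → ℝ) (t : ℝ) (ω : Ω) : ℝ≥0∞ :=
  ∑' k : ℕ, ENNReal.ofReal
    (if partialSum ξ k ω ≤ t then G (t - partialSum ξ k ω) else 0)

/-!
For `n ≤ t` let `V_n` count the `S_k` in the window `(t - n - 1, t - n]`. Since `G` is
nonincreasing, the shot-noise sum is at most `∑_{n ≤ t} G(n) V_n`; Jensen's inequality with the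
weights `G(n)` bounds its `l`-th moment by `(∑_{n ≤ t} G(n))^l · sup_a E[V_a^l]`, and
`∑_{n ≤ t} G(n) ≤ G(0) + ∫_0^t G`. The moments of a window count are bounded uniformly in the
window: more than `j` visits force the `j` increments following the first visit to sum to at
most `1`, and these increments are independent of the first visit, so by the Chernoff bound this
has probability at most `e · E[e^{-ξ}]^j`.
-/

open Real
open scoped Finset

theorem ENNReal.pow_inner_le_weight_mul_Lp {ι : Type*} (s : Finset ι) (a x : ι → ℝ≥0∞)
    {l : ℕ} (hl : 1 ≤ l) :
    (∑ i ∈ s, a i * x i) ^ l ≤ (∑ i ∈ s, a i) ^ (l - 1) * ∑ i ∈ s, a i * x i ^ l := by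
  have hl' : (1 : ℝ) ≤ l := by exact_mod_cast hl
  have hl0 : (l : ℝ) ≠ 0 := by positivity
  have h := ENNReal.inner_le_weight_mul_Lp_of_nonneg s hl' a x
  simp only [ENNReal.rpow_natCast] at h
  calc (∑ i ∈ s, a i * x i) ^ l
      ≤ ((∑ i ∈ s, a i) ^ (1 - (l : ℝ)⁻¹) * (∑ i ∈ s, a i * x i ^ l) ^ (l : ℝ)⁻¹) ^ l := by
        gcongr
    _ = (∑ i ∈ s, a i) ^ (l - 1) * ∑ i ∈ s, a i * x i ^ l := by
        rw [mul_pow, ← ENNReal.rpow_mul_natCast, ← ENNReal.rpow_mul_natCast,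
          inv_mul_cancel₀ hl0, ENNReal.rpow_one, sub_mul, one_mul, inv_mul_cancel₀ hl0,
          ← ENNReal.rpow_natCast, Nat.cast_sub hl, Nat.cast_one]

theorem ENNReal.exists_nat_lt_le_add_one {x : ℝ≥0∞} (hx0 : x ≠ 0) (hxt : x ≠ ⊤) :
    ∃ j : ℕ, (j : ℝ≥0∞) < x ∧ x ≤ j + 1 := by
  have hex : ∃ n : ℕ, x ≤ n := (ENNReal.exists_nat_gt hxt).imp fun _ h => h.le
  have hn0 : Nat.find hex ≠ 0 := fun h =>
    hx0 (nonpos_iff_eq_zero.mp (by simpa [h] using Nat.find_spec hex))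
  refine ⟨Nat.find hex - 1, not_le.mp (Nat.find_min hex (by omega)), ?_⟩
  rw [← Nat.cast_add_one, Nat.sub_add_cancel (Nat.one_le_iff_ne_zero.mpr hn0)]
  exact Nat.find_spec hex

theorem ENNReal.pow_le_tsum_succ_pow_mul_indicator {l : ℕ} (hl : 1 ≤ l) (x : ℝ≥0∞) :
    x ^ l ≤ ∑' j : ℕ, ((j : ℝ≥0∞) + 1) ^ l * (Ioi (j : ℝ≥0∞)).indicator 1 x := by
  rcases eq_or_ne x 0 with rfl | hx0
  · simp [zero_pow (by omega : l ≠ 0)]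
  rcases eq_or_ne x ⊤ with rfl | hxt
  · calc (⊤ : ℝ≥0∞) ^ l ≤ ∑' _ : ℕ, 1 := by
          rw [ENNReal.tsum_const_eq_top_of_ne_zero one_ne_zero]; exact le_top
      _ ≤ _ := ENNReal.tsum_le_tsum fun j => by simp [one_le_pow₀]
  obtain ⟨j, hjx, hxj⟩ := ENNReal.exists_nat_lt_le_add_one hx0 hxt
  calc x ^ l ≤ ((j : ℝ≥0∞) + 1) ^ l * (Ioi (j : ℝ≥0∞)).indicator 1 x := by
        rw [indicator_of_mem (show x ∈ Ioi (j : ℝ≥0∞) from hjx), Pi.one_apply, mul_one]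
        gcongr
    _ ≤ _ := ENNReal.le_tsum j

theorem summable_succ_pow_mul_geometric (l : ℕ) {r : ℝ} (h0 : 0 ≤ r) (h1 : r < 1) :
    Summable fun j : ℕ => ((j : ℝ) + 1) ^ l * r ^ j := by
  refine (summable_descFactorial_mul_geometric_of_norm_lt_one l
    (by rwa [Real.norm_of_nonneg h0] : ‖r‖ < 1)).of_nonneg_of_le (fun j => by positivity)
    fun j => ?_
  gcongr
  rw [Nat.add_descFactorial_eq_ascFactorial]
  exact_mod_cast Nat.pow_succ_le_ascFactorial (j + 1) l

theorem AntitoneOn.sum_range_floor_le {G : ℝ → ℝ} (hG : AntitoneOn G (Ici 0))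
    (hG0 : ∀ x, 0 ≤ G x) {t : ℝ} (ht : 0 ≤ t) :
    ∑ n ∈ Finset.range (⌊t⌋₊ + 1), G n ≤ G 0 + ∫ y in (0 : ℝ)..t, G y := by
  have hsum := (hG.mono (Icc_subset_Ici_self : Icc (0 : ℝ) (0 + ⌊t⌋₊) ⊆ Ici 0)).sum_le_integral
  have hmono : ∫ y in (0 : ℝ)..⌊t⌋₊, G y ≤ ∫ y in (0 : ℝ)..t, G y :=
    intervalIntegral.integral_mono_interval le_rfl (Nat.cast_nonneg _) (Nat.floor_le ht)
      (ae_of_all _ hG0)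
      (hG.mono (by rw [uIcc_of_le ht]; exact Icc_subset_Ici_self)).intervalIntegrable
  rw [Finset.sum_range_succ', Nat.cast_zero, add_comm]
  simp only [zero_add] at hsum
  linarith

theorem lintegral_pow_sum_mul_le {Ω ι : Type*} [MeasurableSpace Ω] {μ : Measure Ω}
    (s : Finset ι) (a : ι → ℝ≥0∞) {X : ι → Ω → ℝ≥0∞} (hX : ∀ i ∈ s, AEMeasurable (X i) μ)
    {l : ℕ} (hl : 1 ≤ l) {K : ℝ≥0∞} (hK : ∀ i ∈ s, ∫⁻ ω, X i ω ^ l ∂μ ≤ K) :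
    ∫⁻ ω, (∑ i ∈ s, a i * X i ω) ^ l ∂μ ≤ (∑ i ∈ s, a i) ^ l * K := by
  have hXl : ∀ i ∈ s, AEMeasurable (fun ω => a i * X i ω ^ l) μ :=
    fun i hi => ((hX i hi).pow_const l).const_mul (a i)
  calc ∫⁻ ω, (∑ i ∈ s, a i * X i ω) ^ l ∂μ
      ≤ ∫⁻ ω, (∑ i ∈ s, a i) ^ (l - 1) * ∑ i ∈ s, a i * X i ω ^ l ∂μ :=
        lintegral_mono fun ω => ENNReal.pow_inner_le_weight_mul_Lp s a (X · ω) hl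
    _ = (∑ i ∈ s, a i) ^ (l - 1) * ∑ i ∈ s, a i * ∫⁻ ω, X i ω ^ l ∂μ := by
        rw [lintegral_const_mul'' _ (Finset.aemeasurable_fun_sum s hXl),
          lintegral_finsetSum' s hXl]
        congr 1
        exact Finset.sum_congr rfl fun i hi =>
          lintegral_const_mul'' _ ((hX i hi).pow_const l)
    _ ≤ (∑ i ∈ s, a i) ^ (l - 1) * ∑ i ∈ s, a i * K := by
        gcongr with i hi
        exact hK i hi
    _ = (∑ i ∈ s, a i) ^ l * K := by
        rw [← Finset.sum_mul, ← mul_assoc, ← pow_succ, Nat.sub_add_cancel hl]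

theorem lintegral_pow_le_tsum_succ_pow_mul_measure {Ω : Type*} [MeasurableSpace Ω]
    {μ : Measure Ω} {f : Ω → ℝ≥0∞} (hf : Measurable f) {l : ℕ} (hl : 1 ≤ l) :
    ∫⁻ ω, f ω ^ l ∂μ ≤ ∑' j : ℕ, ((j : ℝ≥0∞) + 1) ^ l * μ {ω | (j : ℝ≥0∞) < f ω} :=
  calc ∫⁻ ω, f ω ^ l ∂μ
      ≤ ∫⁻ ω, ∑' j : ℕ, ((j : ℝ≥0∞) + 1) ^ l * (f ⁻¹' Ioi (j : ℝ≥0∞)).indicator 1 ω ∂μ :=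
        lintegral_mono fun ω => ENNReal.pow_le_tsum_succ_pow_mul_indicator hl (f ω)
    _ = ∑' j : ℕ, ((j : ℝ≥0∞) + 1) ^ l * μ {ω | (j : ℝ≥0∞) < f ω} := by
        rw [lintegral_tsum fun j =>
          ((measurable_one.indicator (hf measurableSet_Ioi)).const_mul _).aemeasurable]
        refine tsum_congr fun j => ?_
        rw [lintegral_const_mul _ (measurable_one.indicator (hf measurableSet_Ioi)),
          lintegral_indicator_one (hf measurableSet_Ioi)]
        rfl

section Probability

variable {Ω : Type*} [MeasurableSpace Ω] {μ : Measure Ω}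

theorem integrable_exp_mul_of_nonpos [IsFiniteMeasure μ] {X : Ω → ℝ} (hX : AEMeasurable X μ)
    (hX0 : ∀ᵐ ω ∂μ, 0 ≤ X ω) {t : ℝ} (ht : t ≤ 0) :
    Integrable (fun ω => exp (t * X ω)) μ := by
  refine (integrable_const (1 : ℝ)).mono' (hX.const_mul t).exp.aestronglyMeasurable ?_
  filter_upwards [hX0] with ω hω
  rw [Real.norm_eq_abs, abs_of_pos (exp_pos _), exp_le_one_iff]
  exact mul_nonpos_of_nonpos_of_nonneg ht hω

theorem mgf_lt_one_of_pos [IsProbabilityMeasure μ] {X : Ω → ℝ} (hX : AEMeasurable X μ)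
    (hpos : ∀ᵐ ω ∂μ, 0 < X ω) {t : ℝ} (ht : t < 0) : mgf X μ t < 1 := by
  have hint := integrable_exp_mul_of_nonpos hX (hpos.mono fun _ h => h.le) ht.le
  have hlt : ∀ᵐ ω ∂μ, exp (t * X ω) < 1 := by
    filter_upwards [hpos] with ω hω
    exact exp_lt_one_iff.mpr (mul_neg_of_neg_of_pos ht hω)
  have hgap : 0 < ∫ ω, (1 - exp (t * X ω)) ∂μ := by
    rw [integral_pos_iff_support_of_nonneg_ae (hlt.mono fun _ h => (sub_pos.mpr h).le)
      ((integrable_const 1).sub hint)]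
    have hsupp : Function.support (fun ω => 1 - exp (t * X ω)) =ᵐ[μ] univ :=
      ae_eq_univ.mpr (ae_iff.mp (hlt.mono fun _ h => (sub_pos.mpr h).ne'))
    simp [measure_congr hsupp]
  rw [integral_sub (integrable_const 1) hint, integral_const, probReal_univ, one_smul] at hgap
  exact sub_pos.mp hgap

variable {ξ : ℕ → Ω → ℝ}

theorem measure_sum_le_one_le [IsFiniteMeasure μ] (hmeas : ∀ i, Measurable (ξ i))
    (hnonneg : ∀ i, ∀ᵐ ω ∂μ, 0 ≤ ξ i ω) (hindep : iIndepFun ξ μ)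
    (hid : ∀ i, IdentDistrib (ξ i) (ξ 0) μ μ) (F : Finset ℕ) :
    μ {ω | ∑ i ∈ F, ξ i ω ≤ 1} ≤ ENNReal.ofReal (exp 1 * mgf (ξ 0) μ (-1) ^ #F) := by
  have hint : Integrable (fun ω => exp (-1 * ∑ i ∈ F, ξ i ω)) μ :=
    integrable_exp_mul_of_nonpos (Finset.measurable_sum F fun i _ => hmeas i).aemeasurable
      (by filter_upwards [ae_all_iff.mpr hnonneg] with ω hω
          exact Finset.sum_nonneg fun i _ => hω i) (by norm_num)
  have hchernoff := measure_le_le_exp_mul_mgf (X := ∑ i ∈ F, ξ i) (t := -1) 1 (by norm_num)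
    (by simpa only [Finset.sum_apply] using hint)
  rw [hindep.mgf_sum hmeas,
    Finset.prod_eq_pow_card fun i _ => mgf_congr_of_identDistrib _ _ (hid i) _] at hchernoff
  rw [← ofReal_measureReal]
  simpa using ENNReal.ofReal_le_ofReal hchernoff

end Probability

section Visits

variable {Ω : Type*} {ξ : ℕ → Ω → ℝ}

/-- In the notation `ν(t) = #{k | S_k ≤ t}`, this is `ν(a + 1) - ν(a)`. -/
noncomputable def visitCount (ξ : ℕ → Ω → ℝ) (a : ℝ) (ω : Ω) : ℝ≥0∞ :=
  ∑' k, (Ioc a (a + 1)).indicator 1 (partialSum ξ k ω)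

def firstVisit (ξ : ℕ → Ω → ℝ) (a : ℝ) (k : ℕ) : Set Ω :=
  {ω | partialSum ξ k ω ∈ Ioc a (a + 1) ∧ ∀ i < k, partialSum ξ i ω ∉ Ioc a (a + 1)}

theorem partialSum_mono {ω : Ω} (hω : ∀ i, 0 ≤ ξ i ω) : Monotone (partialSum ξ · ω) :=
  fun _ _ hmn => Finset.sum_le_sum_of_subset_of_nonneg (Finset.range_subset_range.mpr hmn)
    fun i _ _ => hω i

theorem visitCount_le_card {a : ℝ} {ω : Ω} {F : Finset ℕ}
    (hF : ∀ k, partialSum ξ k ω ∈ Ioc a (a + 1) → k ∈ F) : visitCount ξ a ω ≤ #F := by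
  rw [visitCount, tsum_eq_sum fun k hk => indicator_of_notMem (mt (hF k) hk) _,
    Finset.card_eq_sum_ones, Nat.cast_sum, Nat.cast_one]
  exact Finset.sum_le_sum fun k _ => indicator_apply_le' (fun _ => le_rfl) fun _ => zero_le_one

theorem exists_firstVisit_sum_Ico_le_one {a : ℝ} {ω : Ω} (hω : ∀ i, 0 ≤ ξ i ω) {j : ℕ}
    (hj : (j : ℝ≥0∞) < visitCount ξ a ω) :
    ∃ k, ω ∈ firstVisit ξ a k ∧ ∑ i ∈ Finset.Ico k (k + j), ξ i ω ≤ 1 := by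
  have hvisit : ∃ k, partialSum ξ k ω ∈ Ioc a (a + 1) := by
    by_contra! h
    have := visitCount_le_card (F := ∅) fun k hk => (h k hk).elim
    simp_all
  have hk₀ := Nat.find_spec hvisit
  set k₀ := Nat.find hvisit
  obtain ⟨k, hk, hvisit_k⟩ : ∃ k, k₀ + j ≤ k ∧ partialSum ξ k ω ∈ Ioc a (a + 1) := by
    by_contra! h
    have := visitCount_le_card (F := Finset.Ico k₀ (k₀ + j)) fun k hk =>
      Finset.mem_Ico.mpr ⟨Nat.find_min' hvisit hk, not_le.mp fun hk' => h k hk' hk⟩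
    rw [Nat.card_Ico, add_tsub_cancel_left] at this
    exact this.not_gt hj
  refine ⟨k₀, ⟨hk₀, fun i hi => Nat.find_min hvisit hi⟩, ?_⟩
  have hmono := partialSum_mono hω hk
  rw [Finset.sum_Ico_eq_sub _ (Nat.le_add_right k₀ j)]
  simp only [partialSum, Set.mem_Ioc] at hk₀ hvisit_k hmono ⊢
  linarith [hk₀.1, hvisit_k.2]

theorem pairwise_disjoint_firstVisit (a : ℝ) :
    Pairwise (Function.onFun Disjoint (firstVisit ξ a)) := by
  intro k k' hkk'
  rcases hkk'.lt_or_gt with h | h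
  · exact Set.disjoint_left.mpr fun ω h₁ h₂ => h₂.2 k h h₁.1
  · exact Set.disjoint_left.mpr fun ω h₁ h₂ => h₁.2 k' h h₂.1

theorem measurable_sum_iSup_comap {S : Set ℕ} {F : Finset ℕ} (hF : ↑F ⊆ S) :
    Measurable[⨆ i ∈ S, (inferInstance : MeasurableSpace ℝ).comap (ξ i)]
      fun ω => ∑ i ∈ F, ξ i ω :=
  Finset.measurable_sum F fun i hi => (comap_measurable (ξ i)).mono
    (le_iSup₂ (f := fun j (_ : j ∈ S) => (inferInstance : MeasurableSpace ℝ).comap (ξ j))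
      i (hF hi)) le_rfl

theorem measurableSet_firstVisit (a : ℝ) (k : ℕ) :
    MeasurableSet[⨆ i ∈ Set.Iio k, (inferInstance : MeasurableSpace ℝ).comap (ξ i)]
      (firstVisit ξ a k) := by
  have hS : ∀ i ≤ k,
      Measurable[⨆ i ∈ Set.Iio k, (inferInstance : MeasurableSpace ℝ).comap (ξ i)]
        (partialSum ξ i) := fun i hi =>
    measurable_sum_iSup_comap fun x hx => (show x < k by simp at hx; omega)
  simp only [firstVisit, ofPred_and, ofPred_forall]
  exact (hS k le_rfl measurableSet_Ioc).inter
    (.iInter fun i => .iInter fun hi => (hS i hi.le measurableSet_Ioc).compl)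

variable [MeasurableSpace Ω]

theorem measurable_visitCount (hmeas : ∀ i, Measurable (ξ i)) (a : ℝ) :
    Measurable (visitCount ξ a) :=
  Measurable.tsum fun k => (measurable_one.indicator measurableSet_Ioc).comp
    (Finset.measurable_sum (Finset.range k) fun i _ => hmeas i)

variable {μ : Measure Ω}

theorem measure_firstVisit_inter (hmeas : ∀ i, Measurable (ξ i)) (hindep : iIndepFun ξ μ)
    (a : ℝ) {k : ℕ} {F : Finset ℕ} (hF : ∀ i ∈ F, k ≤ i) :
    μ (firstVisit ξ a k ∩ {ω | ∑ i ∈ F, ξ i ω ≤ 1})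
      = μ (firstVisit ξ a k) * μ {ω | ∑ i ∈ F, ξ i ω ≤ 1} := by
  have hdisj : Disjoint (Set.Iio k) (F : Set ℕ) :=
    Set.disjoint_left.mpr fun i hi hiF => (not_le.mpr hi) (hF i hiF)
  have hind := indep_iSup_of_disjoint (fun i => (hmeas i).comap_le)
    ((iIndepFun_iff_iIndep _ _ _).mp hindep) hdisj
  exact (Indep_iff _ _ _).mp hind _ _ (measurableSet_firstVisit a k)
    (measurableSet_le (measurable_sum_iSup_comap subset_rfl) measurable_const)

variable [IsProbabilityMeasure μ]

theorem measure_lt_visitCount_le (hmeas : ∀ i, Measurable (ξ i))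
    (hnonneg : ∀ i, ∀ᵐ ω ∂μ, 0 ≤ ξ i ω) (hindep : iIndepFun ξ μ)
    (hid : ∀ i, IdentDistrib (ξ i) (ξ 0) μ μ) (a : ℝ) (j : ℕ) :
    μ {ω | (j : ℝ≥0∞) < visitCount ξ a ω}
      ≤ ENNReal.ofReal (exp 1 * mgf (ξ 0) μ (-1) ^ j) := by
  set D : ℕ → Set Ω := fun k => {ω | ∑ i ∈ Finset.Ico k (k + j), ξ i ω ≤ 1}
  have hcover : {ω | (j : ℝ≥0∞) < visitCount ξ a ω} ≤ᵐ[μ] ⋃ k, firstVisit ξ a k ∩ D k := by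
    filter_upwards [ae_all_iff.mpr hnonneg] with ω hω hj
    obtain ⟨k, hk, hD⟩ := exists_firstVisit_sum_Ico_le_one hω hj
    exact mem_iUnion.mpr ⟨k, hk, hD⟩
  have hmeas_firstVisit : ∀ k, MeasurableSet (firstVisit ξ a k) := fun k =>
    iSup₂_le (fun i _ => (hmeas i).comap_le) _ (measurableSet_firstVisit a k)
  calc μ {ω | (j : ℝ≥0∞) < visitCount ξ a ω}
      ≤ ∑' k, μ (firstVisit ξ a k ∩ D k) := (measure_mono_ae hcover).trans (measure_iUnion_le _)
    _ = ∑' k, μ (firstVisit ξ a k) * μ (D k) := tsum_congr fun k =>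
        measure_firstVisit_inter hmeas hindep a fun i hi => (Finset.mem_Ico.mp hi).1
    _ ≤ ∑' k, μ (firstVisit ξ a k) * ENNReal.ofReal (exp 1 * mgf (ξ 0) μ (-1) ^ j) := by
        gcongr with k
        simpa using measure_sum_le_one_le hmeas hnonneg hindep hid (Finset.Ico k (k + j))
    _ ≤ ENNReal.ofReal (exp 1 * mgf (ξ 0) μ (-1) ^ j) := by
        rw [ENNReal.tsum_mul_right,
          ← measure_iUnion (pairwise_disjoint_firstVisit a) hmeas_firstVisit]
        exact mul_le_of_le_one_left' prob_le_one

theorem lintegral_visitCount_pow_le (hmeas : ∀ i, Measurable (ξ i))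
    (hpos : ∀ i, ∀ᵐ ω ∂μ, 0 < ξ i ω) (hindep : iIndepFun ξ μ)
    (hid : ∀ i, IdentDistrib (ξ i) (ξ 0) μ μ) {l : ℕ} (hl : 1 ≤ l) (a : ℝ) :
    ∫⁻ ω, visitCount ξ a ω ^ l ∂μ
      ≤ ENNReal.ofReal (exp 1 * ∑' j : ℕ, ((j : ℝ) + 1) ^ l * mgf (ξ 0) μ (-1) ^ j) := by
  set r := mgf (ξ 0) μ (-1)
  have hr0 : 0 ≤ r := mgf_nonneg
  have hsummable := (summable_succ_pow_mul_geometric l hr0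
    (mgf_lt_one_of_pos (hmeas 0).aemeasurable (hpos 0) (by norm_num))).mul_left (exp 1)
  calc ∫⁻ ω, visitCount ξ a ω ^ l ∂μ
      ≤ ∑' j : ℕ, ((j : ℝ≥0∞) + 1) ^ l * μ {ω | (j : ℝ≥0∞) < visitCount ξ a ω} :=
        lintegral_pow_le_tsum_succ_pow_mul_measure (measurable_visitCount hmeas a) hl
    _ ≤ ∑' j : ℕ, ((j : ℝ≥0∞) + 1) ^ l * ENNReal.ofReal (exp 1 * r ^ j) := by
        gcongr with j
        exact measure_lt_visitCount_le hmeas (fun i => (hpos i).mono fun _ h => h.le)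
          hindep hid a j
    _ = ENNReal.ofReal (exp 1 * ∑' j : ℕ, ((j : ℝ) + 1) ^ l * r ^ j) := by
        rw [← tsum_mul_left, ENNReal.ofReal_tsum_of_nonneg (fun j => by positivity) hsummable]
        refine tsum_congr fun j => ?_
        have hcast : ((j : ℝ≥0∞) + 1) ^ l = ENNReal.ofReal (((j : ℝ) + 1) ^ l) := by
          rw [ENNReal.ofReal_pow (by positivity), ENNReal.ofReal_add (by positivity) zero_le_one,
            ENNReal.ofReal_natCast, ENNReal.ofReal_one]
        rw [hcast, ← ENNReal.ofReal_mul (by positivity), mul_left_comm]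

end Visits

theorem shotSum_le_sum_visitCount {Ω : Type*} {G : ℝ → ℝ} (hG : AntitoneOn G (Ici 0))
    (ξ : ℕ → Ω → ℝ) (t : ℝ) {ω : Ω} (hω : ∀ i, 0 ≤ ξ i ω) :
    shotSum G ξ t ω ≤ ∑ n ∈ Finset.range (⌊t⌋₊ + 1),
      ENNReal.ofReal (G n) * visitCount ξ (t - (n + 1)) ω := by
  simp only [visitCount, ← ENNReal.tsum_mul_left]
  rw [← Summable.tsum_finsetSum fun _ _ => ENNReal.summable]
  refine ENNReal.tsum_le_tsum fun k => ?_
  split_ifs with hk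
  · have hS0 : 0 ≤ partialSum ξ k ω := Finset.sum_nonneg fun i _ => hω i
    set x := t - partialSum ξ k ω
    have hx0 : 0 ≤ x := sub_nonneg.mpr hk
    have hn : ⌊x⌋₊ ∈ Finset.range (⌊t⌋₊ + 1) :=
      Finset.mem_range.mpr (Nat.lt_succ_of_le (Nat.floor_le_floor (by linarith)))
    have hmem : partialSum ξ k ω ∈ Ioc (t - (⌊x⌋₊ + 1)) (t - (⌊x⌋₊ + 1) + 1) := by
      constructor <;> linarith [Nat.floor_le hx0, Nat.lt_floor_add_one x]
    refine le_trans ?_ (Finset.single_le_sum (fun n _ => zero_le) hn)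
    rw [indicator_of_mem hmem, Pi.one_apply, mul_one]
    exact ENNReal.ofReal_le_ofReal (hG (mem_Ici.mpr (Nat.cast_nonneg _)) hx0 (Nat.floor_le hx0))
  · simp

theorem stmt_7_general {Ω : Type*} [MeasurableSpace Ω] (μ : Measure Ω) [IsProbabilityMeasure μ]
    (ξ : ℕ → Ω → ℝ) (hmeas : ∀ i, Measurable (ξ i))
    (hpos : ∀ i, ∀ᵐ ω ∂μ, 0 < ξ i ω)
    (hindep : iIndepFun ξ μ)
    (hid : ∀ i, IdentDistrib (ξ i) (ξ 0) μ μ)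
    (G : ℝ → ℝ) (hG0 : ∀ x, 0 ≤ G x)
    (hGanti : AntitoneOn G (Ici 0))
    (l : ℕ) (hl : 1 ≤ l) :
    ∃ C : ℝ, ∃ t₀ : ℝ, ∀ t : ℝ, t₀ ≤ t →
      (∫⁻ ω, (shotSum G ξ t ω) ^ l ∂μ)
        ≤ ENNReal.ofReal (C * ((∫ y in (0:ℝ)..t, G y) + 1) ^ l) := by
  set K := exp 1 * ∑' j : ℕ, ((j : ℝ) + 1) ^ l * mgf (ξ 0) μ (-1) ^ j
  have hK0 : 0 ≤ K := by have : 0 ≤ mgf (ξ 0) μ (-1) := mgf_nonneg; positivity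
  refine ⟨K * (G 0 + 1) ^ l, 0, fun t ht => ?_⟩
  set I := ∫ y in (0 : ℝ)..t, G y
  have hI0 : 0 ≤ I := intervalIntegral.integral_nonneg ht fun y _ => hG0 y
  have hb : 0 ≤ (G 0 + 1) * (I + 1) := mul_nonneg (by linarith [hG0 0]) (by linarith)
  have hweights : ∑ n ∈ Finset.range (⌊t⌋₊ + 1), ENNReal.ofReal (G n)
      ≤ ENNReal.ofReal ((G 0 + 1) * (I + 1)) := by
    rw [← ENNReal.ofReal_sum_of_nonneg (f := fun n : ℕ => G n) fun n _ => hG0 n]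
    refine ENNReal.ofReal_le_ofReal ((hGanti.sum_range_floor_le hG0 ht).trans ?_)
    nlinarith [hG0 0]
  calc ∫⁻ ω, shotSum G ξ t ω ^ l ∂μ
      ≤ ∫⁻ ω, (∑ n ∈ Finset.range (⌊t⌋₊ + 1),
          ENNReal.ofReal (G n) * visitCount ξ (t - (n + 1)) ω) ^ l ∂μ := by
        refine lintegral_mono_ae ?_
        filter_upwards [ae_all_iff.mpr hpos] with ω hω
        gcongr
        exact shotSum_le_sum_visitCount hGanti ξ t fun i => (hω i).le
    _ ≤ (∑ n ∈ Finset.range (⌊t⌋₊ + 1), ENNReal.ofReal (G n)) ^ l * ENNReal.ofReal K :=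
        lintegral_pow_sum_mul_le _ _ (fun n _ => (measurable_visitCount hmeas _).aemeasurable) hl
          fun n _ => lintegral_visitCount_pow_le hmeas hpos hindep hid hl _
    _ ≤ ENNReal.ofReal ((G 0 + 1) * (I + 1)) ^ l * ENNReal.ofReal K := by gcongr
    _ = ENNReal.ofReal (K * (G 0 + 1) ^ l * (I + 1) ^ l) := by
        rw [← ENNReal.ofReal_pow hb, ← ENNReal.ofReal_mul (pow_nonneg hb l), mul_pow]
        ring_nf

theorem stmt_7 {Ω : Type*} [MeasurableSpace Ω] (μ : Measure Ω) [IsProbabilityMeasure μ]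
    (ξ : ℕ → Ω → ℝ) (hmeas : ∀ i, Measurable (ξ i))
    (hpos : ∀ i, ∀ᵐ ω ∂μ, 0 < ξ i ω)
    (hindep : iIndepFun ξ μ)
    (hid : ∀ i, IdentDistrib (ξ i) (ξ 0) μ μ)
    (G : ℝ → ℝ) (hG0 : ∀ x, 0 ≤ G x)
    (hGloc : ∀ b : ℝ, 0 ≤ b → ∃ M : ℝ, ∀ x ∈ Icc 0 b, G x ≤ M)
    (hGanti : AntitoneOn G (Ici 0))
    (l : ℕ) (hl : 1 ≤ l) :
    ∃ C : ℝ, ∃ t₀ : ℝ, ∀ t : ℝ, t₀ ≤ t →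
      (∫⁻ ω, (shotSum G ξ t ω) ^ l ∂μ)
        ≤ ENNReal.ofReal (C * ((∫ y in (0:ℝ)..t, G y) + 1) ^ l) :=
  stmt_7_general μ ξ hmeas hpos hindep hid G hG0 hGanti l hl
end

section
/- Let (ξ_k, η_k), k ≥ 1, be i.i.d. copies of a vector (ξ, η) with positive components and E[ξ] = m < ∞. With S₀ = 0, Sₙ = ξ₁ + ⋯ + ξₙ, T_k = S_{k-1} + η_k, and N(x) = Σ_{k≥1} 1{T_k ≤ x}, one has for every s > 0: lim_{n→∞} N(ns)/n = s/m almost surely. -/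
open MeasureTheory ProbabilityTheory Filter
open scoped ENNReal

/-- Points of the perturbed random walk: `T_{k+1} = S_k + η_{k+1}`, `0`-indexed. -/
noncomputable def prwPoint {Ω : Type*} (ξ η : ℕ → Ω → ℝ) (k : ℕ) (ω : Ω) : ℝ :=
  partialSum ξ k ω + η k ω

/-- `N(x) = #{k : T_k ≤ x}`, as an `ℝ≥0∞`-valued count. -/
noncomputable def prwCount {Ω : Type*} (ξ η : ℕ → Ω → ℝ) (x : ℝ) (ω : Ω) : ℝ≥0∞ :=
  ∑' k : ℕ, if prwPoint ξ η k ω ≤ x then (1 : ℝ≥0∞) else 0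

/-!
Write `ν(x) = #{k : S_k ≤ x}`. Because `S_{ν(x)-1} ≤ x < S_{ν(x)}`, the strong law `S_k / k → m`
gives the renewal strong law `ν(x) / x → 1 / m`. Since `η > 0`, `N(x) ≤ ν(x)`; conversely an index
with `S_k ≤ x - y` is counted by `N(x)` unless `η_k > y`, so
`N(x) ≥ ν(x - y) - #{k < ν(x) : η_k > y}`. By the strong law for the indicators of `η_k > y`, the
last term divided by `n` tends to `P(η > y) s / m` at `x = n s`, and this vanishes as `y → ∞`.
-/

open Finset Topology

lemma tendsto_of_le_of_forall_lower {α ι : Type*} {l : Filter α} {F : Filter ι} [F.NeBot]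
    {f u : α → ℝ} {g : ι → α → ℝ} {r : ι → ℝ} {L : ℝ}
    (hu : Tendsto u l (𝓝 L)) (hfu : ∀ᶠ a in l, f a ≤ u a)
    (hg : ∀ i, Tendsto (g i) l (𝓝 (L - r i))) (hgf : ∀ i, ∀ᶠ a in l, g i a ≤ f a)
    (hr : Tendsto r F (𝓝 0)) : Tendsto f l (𝓝 L) := by
  refine tendsto_order.2 ⟨fun b hb => ?_, fun b hb => ?_⟩
  · obtain ⟨i, hi⟩ := (hr.eventually (gt_mem_nhds (sub_pos.2 hb))).exists
    filter_upwards [(hg i).eventually (lt_mem_nhds (by linarith : b < L - r i)), hgf i]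
      with a hba hfa
    exact hba.trans_le hfa
  · filter_upwards [hu.eventually (gt_mem_nhds hb), hfu] with a hub hfu
    exact hfu.trans_lt hub

-- The paper's `ν(x)`. `ncard` is `0` on infinite sets, which cannot occur once `S → ∞`.
noncomputable def renewalCount (S : ℕ → ℝ) (x : ℝ) : ℕ := {k | S k ≤ x}.ncard

section Renewal

variable {S : ℕ → ℝ} {m : ℝ}

lemma tendsto_atTop_of_tendsto_div (hm : 0 < m)
    (hS : Tendsto (fun k : ℕ => S k / k) atTop (𝓝 m)) : Tendsto S atTop atTop := by
  refine (hS.pos_mul_atTop hm tendsto_natCast_atTop_atTop).congr' ?_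
  filter_upwards [eventually_ne_atTop 0] with k hk
  simp [hk]

lemma tendsto_pred_div (hS : Tendsto (fun k : ℕ => S k / k) atTop (𝓝 m)) :
    Tendsto (fun k : ℕ => S (k - 1) / k) atTop (𝓝 m) := by
  rw [← tendsto_add_atTop_iff_nat 1]
  have := hS.mul (tendsto_natCast_div_add_atTop (1 : ℝ))
  rw [mul_one] at this
  refine this.congr' ?_
  filter_upwards [eventually_ne_atTop 0] with k hk
  push_cast
  field_simp

lemma le_iff_lt_renewalCount (hmono : Monotone S) (hS : Tendsto S atTop atTop) {x : ℝ} {k : ℕ} :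
    S k ≤ x ↔ k < renewalCount S x := by
  have below_of_lt {j : ℕ} (hj : x < S j) : {i | S i ≤ x} ⊆ Set.Iio j := fun i hi =>
    lt_of_not_ge fun hji => (hj.trans_le (hmono hji)).not_ge hi
  obtain ⟨K, hK⟩ := (hS.eventually_gt_atTop x).exists
  constructor
  · intro hk
    have := Set.ncard_le_ncard (fun i (hi : i ∈ Set.Iic k) => (hmono hi).trans hk)
      ((Set.finite_Iio K).subset (below_of_lt hK))
    rw [Set.ncard_Iic_nat] at this
    exact this
  · intro hk
    by_contra! h
    have := Set.ncard_le_ncard (below_of_lt h) (Set.finite_Iio k)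
    rw [Set.ncard_Iio_nat] at this
    exact (hk.trans_le this).false

lemma tendsto_renewalCount (hmono : Monotone S) (hS : Tendsto S atTop atTop) :
    Tendsto (renewalCount S) atTop atTop :=
  tendsto_atTop.2 fun k => (eventually_ge_atTop (S k)).mono fun _ hx =>
    ((le_iff_lt_renewalCount hmono hS).1 hx).le

theorem tendsto_renewalCount_div (hmono : Monotone S) (hm : 0 < m)
    (hS : Tendsto (fun k : ℕ => S k / k) atTop (𝓝 m)) :
    Tendsto (fun x => (renewalCount S x : ℝ) / x) atTop (𝓝 m⁻¹) := by
  have hS_top := tendsto_atTop_of_tendsto_div hm hS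
  have hν := tendsto_renewalCount hmono hS_top
  -- `S (ν x - 1) ≤ x < S (ν x)` squeezes `x / ν x` towards `m`.
  have hx : Tendsto (fun x => x / renewalCount S x) atTop (𝓝 m) := by
    refine tendsto_of_tendsto_of_tendsto_of_le_of_le' ((tendsto_pred_div hS).comp hν)
      (hS.comp hν) ?_ ?_
    · filter_upwards [hν.eventually_ge_atTop 1] with x hx
      refine div_le_div_of_nonneg_right ?_ (Nat.cast_nonneg _)
      exact (le_iff_lt_renewalCount hmono hS_top).2 (by omega)
    · filter_upwards with x
      refine div_le_div_of_nonneg_right ?_ (Nat.cast_nonneg _)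
      exact (not_le.1 fun h => ((le_iff_lt_renewalCount hmono hS_top).1 h).false).le
  simpa using hx.inv₀ hm.ne'

lemma tendsto_renewalCount_mul_sub_div (hmono : Monotone S) (hm : 0 < m)
    (hS : Tendsto (fun k : ℕ => S k / k) atTop (𝓝 m)) {s : ℝ} (hs : 0 < s) (y : ℝ) :
    Tendsto (fun n : ℕ => (renewalCount S (n * s - y) : ℝ) / n) atTop (𝓝 (s / m)) := by
  have harg : Tendsto (fun n : ℕ => (n : ℝ) * s - y) atTop atTop :=
    tendsto_atTop_add_const_right _ _ (tendsto_natCast_atTop_atTop.atTop_mul_const hs)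
  have hratio : Tendsto (fun n : ℕ => ((n : ℝ) * s - y) / n) atTop (𝓝 s) := by
    have := (tendsto_const_div_atTop_nhds_zero_nat y).const_sub s
    rw [sub_zero] at this
    refine this.congr' ?_
    filter_upwards [eventually_ne_atTop 0] with n hn
    field_simp
  have := ((tendsto_renewalCount_div hmono hm hS).comp harg).mul hratio
  rw [inv_mul_eq_div] at this
  refine this.congr' ?_
  filter_upwards [harg.eventually_ne_atTop 0] with n hn
  simp [div_mul_div_cancel₀ hn]

end Renewal

section Counting

variable {S e : ℕ → ℝ} {m : ℝ}

lemma toReal_tsum_ite_add_le (hmono : Monotone S) (hS : Tendsto S atTop atTop)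
    (he : ∀ k, 0 ≤ e k) (x : ℝ) :
    (∑' k, if S k + e k ≤ x then (1 : ℝ≥0∞) else 0).toReal
      = #{k ∈ range (renewalCount S x) | S k + e k ≤ x} := by
  rw [tsum_eq_sum (s := range (renewalCount S x)) fun k hk => if_neg fun h => hk <|
    mem_range.2 <| (le_iff_lt_renewalCount hmono hS).1 <| (le_add_of_nonneg_right (he k)).trans h]
  simp

lemma renewalCount_sub_le (hmono : Monotone S) (hS : Tendsto S atTop atTop) {y : ℝ} (hy : 0 ≤ y)
    (x : ℝ) :
    renewalCount S (x - y) ≤ #{k ∈ range (renewalCount S x) | S k + e k ≤ x}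
      + #{k ∈ range (renewalCount S x) | y < e k} := by
  have hν {z : ℝ} {k : ℕ} := le_iff_lt_renewalCount hmono hS (x := z) (k := k)
  calc renewalCount S (x - y) = #(range (renewalCount S (x - y))) := (card_range _).symm
    _ ≤ #({k ∈ range (renewalCount S x) | S k + e k ≤ x}
          ∪ {k ∈ range (renewalCount S x) | y < e k}) := by
      refine card_le_card fun k hk => ?_
      have hSk : S k ≤ x - y := hν.2 (mem_range.1 hk)
      have hkx : k ∈ range (renewalCount S x) := mem_range.2 (hν.1 (by linarith))
      rcases le_or_gt (e k) y with hek | hek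
      · exact mem_union_left _ (mem_filter.2 ⟨hkx, by linarith⟩)
      · exact mem_union_right _ (mem_filter.2 ⟨hkx, hek⟩)
    _ ≤ _ := card_union_le _ _

theorem tendsto_card_filter_add_le_div (hmono : Monotone S) (hm : 0 < m)
    (hS : Tendsto (fun k : ℕ => S k / k) atTop (𝓝 m)) {p : ℕ → ℝ}
    (hdens : ∀ y : ℕ, Tendsto (fun j : ℕ => (#{k ∈ range j | (y : ℝ) < e k} : ℝ) / j)
      atTop (𝓝 (p y)))
    (hp : Tendsto p atTop (𝓝 0)) {s : ℝ} (hs : 0 < s) :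
    Tendsto (fun n : ℕ => (#{k ∈ range (renewalCount S (n * s)) | S k + e k ≤ n * s} : ℝ) / n)
      atTop (𝓝 (s / m)) := by
  have hS_top := tendsto_atTop_of_tendsto_div hm hS
  have hν : Tendsto (fun n : ℕ => (renewalCount S (n * s) : ℝ) / n) atTop (𝓝 (s / m)) := by
    simpa using tendsto_renewalCount_mul_sub_div hmono hm hS hs 0
  have hν_top : Tendsto (fun n : ℕ => renewalCount S (n * s)) atTop atTop :=
    (tendsto_renewalCount hmono hS_top).comp (tendsto_natCast_atTop_atTop.atTop_mul_const hs)
  have hlarge (y : ℕ) : Tendsto (fun n : ℕ =>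
      (#{k ∈ range (renewalCount S (n * s)) | (y : ℝ) < e k} : ℝ) / n)
      atTop (𝓝 (p y * (s / m))) := by
    refine (((hdens y).comp hν_top).mul hν).congr' ?_
    filter_upwards [hν_top.eventually_ne_atTop 0] with n hn
    simp [div_mul_div_cancel₀ ((Nat.cast_ne_zero (R := ℝ)).2 hn)]
  refine tendsto_of_le_of_forall_lower hν (Eventually.of_forall fun n => ?_)
    (fun y : ℕ => (tendsto_renewalCount_mul_sub_div hmono hm hS hs y).sub (hlarge y))
    (fun y : ℕ => Eventually.of_forall fun n => ?_) (by simpa using hp.mul_const (s / m))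
  · refine div_le_div_of_nonneg_right ?_ n.cast_nonneg
    exact_mod_cast (card_filter_le _ _).trans (card_range _).le
  · rw [← sub_div]
    refine div_le_div_of_nonneg_right ?_ n.cast_nonneg
    rw [sub_le_iff_le_add]
    exact_mod_cast renewalCount_sub_le hmono hS_top (Nat.cast_nonneg y) (n * s)

end Counting

section Probability

variable {Ω : Type*} [MeasurableSpace Ω] {μ : Measure Ω}

lemma integral_pos_of_ae_pos [NeZero μ] {f : Ω → ℝ} (hf : ∀ᵐ ω ∂μ, 0 < f ω)
    (hfi : Integrable f μ) : 0 < ∫ ω, f ω ∂μ := by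
  have hf_nonneg : 0 ≤ᵐ[μ] f := hf.mono fun _ h => h.le
  refine (integral_nonneg_of_ae hf_nonneg).lt_of_ne fun h => ?_
  obtain ⟨ω, hω0, hωpos⟩ :=
    (((integral_eq_zero_iff_of_nonneg_ae hf_nonneg hfi).1 h.symm).and hf).exists
  exact hωpos.ne' hω0

lemma tendsto_integral_ite_lt [IsFiniteMeasure μ] {f : Ω → ℝ} (hf : AEMeasurable f μ) :
    Tendsto (fun y : ℕ => ∫ ω, (if (y : ℝ) < f ω then 1 else 0 : ℝ) ∂μ) atTop (𝓝 0) := by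
  have hlim : ∀ ω, Tendsto (fun y : ℕ => (if (y : ℝ) < f ω then 1 else 0 : ℝ)) atTop (𝓝 0) :=
    fun ω => tendsto_const_nhds.congr' <|
      (tendsto_natCast_atTop_atTop.eventually_ge_atTop (f ω)).mono fun _ hy =>
        (if_neg hy.not_gt).symm
  simpa using tendsto_integral_of_dominated_convergence
    (F := fun (y : ℕ) ω => (if (y : ℝ) < f ω then 1 else 0 : ℝ)) (fun _ => 1)
    (fun y => ((measurable_const.ite measurableSet_Ioi measurable_const).comp_aemeasurable
      hf).aestronglyMeasurable) (integrable_const 1)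
    (fun y => Eventually.of_forall fun ω => by split_ifs <;> simp)
    (Eventually.of_forall hlim)

theorem strong_law_ae_comp {E : Type*} [MeasurableSpace E] {X : ℕ → Ω → E}
    (hindep : iIndepFun X μ) (hid : ∀ i, IdentDistrib (X i) (X 0) μ μ) {g : E → ℝ}
    (hg : Measurable g) (hint : Integrable (fun ω => g (X 0 ω)) μ) :
    ∀ᵐ ω ∂μ, Tendsto (fun n : ℕ => (∑ i ∈ range n, g (X i ω)) / n) atTop
      (𝓝 (∫ ω, g (X 0 ω) ∂μ)) :=
  strong_law_ae_real (fun i ω => g (X i ω)) hint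
    (fun _ _ hij => (hindep.comp (fun _ => g) fun _ => hg).indepFun hij) fun i => (hid i).comp hg

end Probability

lemma monotone_partialSum {Ω : Type*} {ξ : ℕ → Ω → ℝ} {ω : Ω} (hξ : ∀ i, 0 ≤ ξ i ω) :
    Monotone fun k => partialSum ξ k ω :=
  monotone_nat_of_le_succ fun k => by simp [partialSum, sum_range_succ, hξ k]

theorem stmt_9_general {Ω : Type*} [MeasurableSpace Ω] (μ : Measure Ω) [IsProbabilityMeasure μ]
    (ξ η : ℕ → Ω → ℝ)
    (hpos : ∀ i, ∀ᵐ ω ∂μ, 0 < ξ i ω ∧ 0 < η i ω)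
    (hindep : iIndepFun (fun i ω => (ξ i ω, η i ω)) μ)
    (hid : ∀ i, IdentDistrib (fun ω => (ξ i ω, η i ω)) (fun ω => (ξ 0 ω, η 0 ω)) μ μ)
    (hint : Integrable (ξ 0) μ) (m : ℝ) (hm : m = ∫ ω, ξ 0 ω ∂μ)
    (s : ℝ) (hs : 0 < s) :
    ∀ᵐ ω ∂μ, Tendsto
      (fun n : ℕ => (prwCount ξ η ((n : ℝ) * s) ω).toReal / (n : ℝ))
      atTop (nhds (s / m)) := by
  have hm_pos : 0 < m := hm ▸ integral_pos_of_ae_pos ((hpos 0).mono fun _ h => h.1) hint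
  have hS : ∀ᵐ ω ∂μ, Tendsto (fun n : ℕ => partialSum ξ n ω / n) atTop (𝓝 m) := by
    simpa [hm, partialSum] using strong_law_ae_comp hindep hid measurable_fst hint
  have hdens (y : ℕ) : ∀ᵐ ω ∂μ,
      Tendsto (fun j : ℕ => (#{k ∈ range j | (y : ℝ) < η k ω} : ℝ) / j) atTop
        (𝓝 (∫ ω, (if (y : ℝ) < η 0 ω then 1 else 0 : ℝ) ∂μ)) := by
    have hg : Measurable fun q : ℝ × ℝ => (if (y : ℝ) < q.2 then 1 else 0 : ℝ) :=
      measurable_const.ite (measurableSet_lt measurable_const measurable_snd) measurable_const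
    simpa using strong_law_ae_comp hindep hid hg
      (.of_bound (hg.comp_aemeasurable (hid 0).aemeasurable_fst).aestronglyMeasurable 1
        (Eventually.of_forall fun ω => by split_ifs <;> simp))
  filter_upwards [hS, ae_all_iff.2 hpos, ae_all_iff.2 hdens] with ω hSω hposω hdensω
  have hmono := monotone_partialSum fun i => (hposω i).1.le
  refine (tendsto_card_filter_add_le_div hmono hm_pos hSω hdensω
    (tendsto_integral_ite_lt (hid 0).aemeasurable_fst.snd) hs).congr fun n => ?_
  rw [prwCount, ← toReal_tsum_ite_add_le hmono (tendsto_atTop_of_tendsto_div hm_pos hSω)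
    fun k => (hposω k).2.le]
  rfl

theorem stmt_9 {Ω : Type*} [MeasurableSpace Ω] (μ : Measure Ω) [IsProbabilityMeasure μ]
    (ξ η : ℕ → Ω → ℝ) (hmeas : ∀ i, Measurable (fun ω => (ξ i ω, η i ω)))
    (hpos : ∀ i, ∀ᵐ ω ∂μ, 0 < ξ i ω ∧ 0 < η i ω)
    (hindep : iIndepFun (fun i ω => (ξ i ω, η i ω)) μ)
    (hid : ∀ i, IdentDistrib (fun ω => (ξ i ω, η i ω)) (fun ω => (ξ 0 ω, η 0 ω)) μ μ)
    (hint : Integrable (ξ 0) μ) (m : ℝ) (hm : m = ∫ ω, ξ 0 ω ∂μ)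
    (s : ℝ) (hs : 0 < s) :
    ∀ᵐ ω ∂μ, Tendsto
      (fun n : ℕ => (prwCount ξ η ((n : ℝ) * s) ω).toReal / (n : ℝ))
      atTop (nhds (s / m)) :=
  stmt_9_general μ ξ η hpos hindep hid hint m hm s hs
end

section
/- Let (ξ_k, η_k) be i.i.d. with positive components, Sₙ = ξ₁ + ⋯ + ξₙ, F(x) = P(η ≤ x), and ν as above. Then for every δ > 0, almost surely m^{-δ} · Σ_{k≥0} (F(m+1−S_k)·1{S_k ≤ m+1} − F(m−S_k)·1{S_k ≤ m}) → 0 as integer m → ∞. -/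
/-!
The `k`-th summand is `G (m + 1 - S k) - G (m - S k)` for the nondecreasing function
`G = F · 1_{[0, ∞)}` with values in `[0, 1]`. If `S (k + q) ≥ S k + 1` whenever `S k ≤ m + 1`,
then `G (m - S k) ≥ G (m + 1 - S (k + q))` and the sum telescopes with step `q`, so it lies in
`[0, q]`. Choosing `t ≤ 0` with `mgf ξ₀ t ≤ 1/16`, a Chernoff bound shows that `q = log₂ m + 1`
consecutive steps have total length `< 1` with probability at most `e^{-t} (m + 1)^{-4}`, because
`2 ^ q > m`. Only the `(m + 2) q` windows starting before index `(m + 2) q` matter (the others start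
above level `m + 1`), so by Borel–Cantelli the sum is almost surely eventually at most
`log₂ m + 1 = o(m^δ)`.
-/

open MeasureTheory ProbabilityTheory Filter Real
open scoped ENNReal

/-- `∑_{k≥0} (F(m+1−S_k)·1{S_k ≤ m+1} − F(m−S_k)·1{S_k ≤ m})`. -/
noncomputable def prwFdiff {Ω : Type*} (ξ : ℕ → Ω → ℝ) (F : ℝ → ℝ) (m : ℕ) (ω : Ω) : ℝ :=
  ∑' k : ℕ,
    ((if partialSum ξ k ω ≤ (m : ℝ) + 1 then F ((m : ℝ) + 1 - partialSum ξ k ω) else 0)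
      - (if partialSum ξ k ω ≤ (m : ℝ) then F ((m : ℝ) - partialSum ξ k ω) else 0))

open Finset in
theorem sum_range_sub_le_of_add_one_le {G : ℝ → ℝ} (hG : Monotone G)
    (hG_neg : ∀ y < 0, G y = 0) (hG_le : ∀ y, G y ≤ 1) {T : ℕ → ℝ} (hT : Monotone T)
    {x : ℝ} {q : ℕ} (hgap : ∀ k, T k ≤ x + 1 → T k + 1 ≤ T (k + q)) (L : ℕ) :
    ∑ k ∈ range L, (G (x + 1 - T k) - G (x - T k)) ≤ q := by
  have hG_nonneg (y : ℝ) : 0 ≤ G y := by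
    rcases lt_or_ge y 0 with hy | hy
    · exact (hG_neg y hy).ge
    · exact (hG_neg (-1) (by norm_num)).symm.le.trans (hG (by linarith))
  set f : ℕ → ℝ := fun k => G (x + 1 - T k)
  have hstep (k : ℕ) : f (q + k) ≤ G (x - T k) := by
    by_cases hk : T k ≤ x + 1
    · have := hgap k hk
      rw [add_comm k q] at this
      exact hG (by linarith)
    · exact (hG_neg _ (by linarith [hT (Nat.le_add_left k q)])).le.trans (hG_nonneg _)
  have htel : ∑ k ∈ range L, f k - ∑ k ∈ range L, f (q + k)
      = ∑ k ∈ range q, f k - ∑ k ∈ range q, f (L + k) := by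
    have h1 := sum_range_add f L q
    rw [add_comm L q, sum_range_add f q L] at h1
    linarith
  calc ∑ k ∈ range L, (G (x + 1 - T k) - G (x - T k))
      ≤ ∑ k ∈ range L, (f k - f (q + k)) := sum_le_sum fun k _ => by linarith [hstep k]
    _ = ∑ k ∈ range q, f k - ∑ k ∈ range q, f (L + k) := by rw [sum_sub_distrib, htel]
    _ ≤ ∑ _k ∈ range q, (1 : ℝ) - 0 :=
        sub_le_sub (sum_le_sum fun k _ => hG_le _) (sum_nonneg fun k _ => hG_nonneg _)
    _ = q := by simp

theorem prwFdiff_nonneg_and_le {Ω : Type*} {ξ : ℕ → Ω → ℝ} {F : ℝ → ℝ} (hF : Monotone F)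
    (hF_nonneg : ∀ y, 0 ≤ F y) (hF_le : ∀ y, F y ≤ 1) {ω : Ω}
    (hS : Monotone (partialSum ξ · ω)) {m q : ℕ}
    (hgap : ∀ k, partialSum ξ k ω ≤ m + 1 → partialSum ξ k ω + 1 ≤ partialSum ξ (k + q) ω) :
    0 ≤ prwFdiff ξ F m ω ∧ prwFdiff ξ F m ω ≤ q := by
  set G : ℝ → ℝ := fun y => if 0 ≤ y then F y else 0
  have hG : Monotone G := by
    intro y z hyz
    by_cases hy : 0 ≤ y
    · simp only [G, if_pos hy, if_pos (hy.trans hyz)]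
      exact hF hyz
    · simp only [G, if_neg hy]
      split_ifs <;> simp [hF_nonneg]
  have hterm (k : ℕ) : G (m + 1 - partialSum ξ k ω) - G (m - partialSum ξ k ω) =
      (if partialSum ξ k ω ≤ (m : ℝ) + 1 then F ((m : ℝ) + 1 - partialSum ξ k ω) else 0)
      - (if partialSum ξ k ω ≤ (m : ℝ) then F ((m : ℝ) - partialSum ξ k ω) else 0) := by
    simp only [G, sub_nonneg]
  have hnonneg (k : ℕ) : 0 ≤ G (m + 1 - partialSum ξ k ω) - G (m - partialSum ξ k ω) :=
    sub_nonneg.2 (hG (by linarith))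
  simp only [prwFdiff, ← hterm]
  refine ⟨tsum_nonneg hnonneg, Real.tsum_le_of_sum_range_le hnonneg fun L => ?_⟩
  refine sum_range_sub_le_of_add_one_le hG (fun y hy => if_neg hy.not_ge)
    (fun y => ?_) hS hgap L
  simp only [G]
  split_ifs <;> simp [hF_le]

theorem add_one_le_of_forall_lt_mul {S : ℕ → ℝ} (hS : Monotone S) (hS0 : 0 ≤ S 0) {n q : ℕ}
    (hq : 0 < q) (h : ∀ k < n * q, S k + 1 ≤ S (k + q)) {k : ℕ} (hk : S k < n) :
    S k + 1 ≤ S (k + q) := by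
  have hlevel : ∀ l ≤ n, (l : ℝ) ≤ S (l * q) := by
    intro l
    induction l with
    | zero => simpa using hS0
    | succ l ih =>
      intro hl
      have hstep := h (l * q) (Nat.mul_lt_mul_of_pos_right (by omega) hq)
      rw [Nat.succ_mul]
      push_cast
      linarith [ih (by omega)]
  refine h k (lt_of_not_ge fun hnk => ?_)
  linarith [hlevel n le_rfl, hS hnk]

section Chernoff

variable {Ω : Type*} [MeasurableSpace Ω] {μ : Measure Ω}

theorem measureReal_sum_le_le_exp_mul_mgf_pow [IsFiniteMeasure μ] {ι : Type*} {X : ι → Ω → ℝ}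
    {i₀ : ι} (hmeas : ∀ i, Measurable (X i)) (hindep : iIndepFun X μ)
    (hid : ∀ i, IdentDistrib (X i) (X i₀) μ μ) (hX : ∀ i, ∀ᵐ ω ∂μ, 0 ≤ X i ω) {t : ℝ}
    (ht : t ≤ 0) (s : Finset ι) (x : ℝ) :
    μ.real {ω | ∑ i ∈ s, X i ω ≤ x} ≤ exp (-t * x) * mgf (X i₀) μ t ^ s.card := by
  have hint : Integrable (fun ω => exp (t * (∑ i ∈ s, X i) ω)) μ := by
    refine .of_mem_Icc 0 1 (by fun_prop) ?_
    filter_upwards [(eventually_all_finset s).2 fun i _ => hX i] with ω hω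
    refine ⟨(exp_pos _).le, exp_le_one_iff.2 (mul_nonpos_of_nonpos_of_nonneg ht ?_)⟩
    simpa only [Finset.sum_apply] using Finset.sum_nonneg hω
  calc μ.real {ω | ∑ i ∈ s, X i ω ≤ x} = μ.real {ω | (∑ i ∈ s, X i) ω ≤ x} := by
        simp only [Finset.sum_apply]
    _ ≤ exp (-t * x) * mgf (∑ i ∈ s, X i) μ t := measure_le_le_exp_mul_mgf x ht hint
    _ = exp (-t * x) * mgf (X i₀) μ t ^ s.card := by
        rw [hindep.mgf_sum hmeas, Finset.prod_eq_pow_card fun i _ =>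
          mgf_congr_of_identDistrib _ _ (hid i) t]

theorem tendsto_mgf_atBot_of_pos [IsFiniteMeasure μ] {X : Ω → ℝ} (hX : Measurable X)
    (hpos : ∀ᵐ ω ∂μ, 0 < X ω) : Tendsto (mgf X μ) atBot (nhds 0) := by
  have := tendsto_integral_filter_of_dominated_convergence (μ := μ) (l := atBot)
    (F := fun t ω => exp (t * X ω)) (f := 0) (fun _ => 1)
    (Eventually.of_forall fun t => by fun_prop) ?_ (integrable_const 1) ?_
  · unfold mgf
    simpa using this
  · filter_upwards [eventually_le_atBot 0] with t ht
    filter_upwards [hpos] with ω hω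
    rw [norm_of_nonneg (exp_pos _).le]
    exact exp_le_one_iff.2 (mul_nonpos_of_nonpos_of_nonneg ht hω.le)
  · filter_upwards [hpos] with ω hω
    exact tendsto_exp_atBot.comp (tendsto_id.atBot_mul_const hω)

end Chernoff

section Window

variable {Ω : Type*} [MeasurableSpace Ω] {μ : Measure Ω} [IsProbabilityMeasure μ]
  {X : ℕ → Ω → ℝ}

theorem measure_partialSum_add_lt_le (hmeas : ∀ i, Measurable (X i)) (hindep : iIndepFun X μ)
    (hid : ∀ i, IdentDistrib (X i) (X 0) μ μ) (hX : ∀ i, ∀ᵐ ω ∂μ, 0 ≤ X i ω) {t : ℝ}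
    (ht : t ≤ 0) (k q : ℕ) :
    μ {ω | partialSum X (k + q) ω < partialSum X k ω + 1}
      ≤ ENNReal.ofReal (exp (-t) * mgf (X 0) μ t ^ q) := by
  have hsub : {ω | partialSum X (k + q) ω < partialSum X k ω + 1}
      ⊆ {ω | ∑ i ∈ Finset.Ico k (k + q), X i ω ≤ 1} := fun ω hω => by
    simp only [Set.mem_ofPred_eq, partialSum,
      Finset.sum_Ico_eq_sub _ (Nat.le_add_right k q)] at hω ⊢
    linarith
  have hchernoff := measureReal_sum_le_le_exp_mul_mgf_pow hmeas hindep hid hX ht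
    (Finset.Ico k (k + q)) 1
  rw [Nat.card_Ico, Nat.add_sub_cancel_left, mul_one] at hchernoff
  exact (measure_mono hsub).trans
    ((ofReal_measureReal (measure_ne_top _ _)).symm.trans_le (ENNReal.ofReal_le_ofReal hchernoff))

theorem card_windows_mul_pow_le {ρ : ℝ} (hρ₀ : 0 ≤ ρ) (hρ : ρ ≤ 1 / 16) (m : ℕ) :
    (((m + 2) * (Nat.log 2 m + 1) : ℕ) : ℝ) * ρ ^ (Nat.log 2 m + 1) ≤ 2 / ((m : ℝ) + 1) ^ 2 := by
  set q := Nat.log 2 m + 1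
  have hpow : m + 1 ≤ 2 ^ q := Nat.lt_pow_succ_log_self one_lt_two m
  have hq : q ≤ m + 1 := Nat.succ_le_succ (Nat.log_le_self 2 m)
  have hcount : (m + 2) * q * (m + 1) ^ 2 ≤ 2 * 16 ^ q :=
    calc (m + 2) * q * (m + 1) ^ 2 ≤ (2 * (m + 1)) * (m + 1) * (m + 1) ^ 2 := by gcongr; omega
      _ = 2 * (m + 1) ^ 4 := by ring
      _ ≤ 2 * (2 ^ q) ^ 4 := by gcongr
      _ = 2 * 16 ^ q := by rw [← pow_mul, mul_comm _ 4, pow_mul]; norm_num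
  rw [le_div_iff₀ (by positivity)]
  calc (((m + 2) * q : ℕ) : ℝ) * ρ ^ q * ((m : ℝ) + 1) ^ 2
      = (((m + 2) * q * (m + 1) ^ 2 : ℕ) : ℝ) * ρ ^ q := by push_cast; ring
    _ ≤ 2 * 16 ^ q * (1 / 16) ^ q := by gcongr; exact_mod_cast hcount
    _ = 2 := by rw [mul_assoc, ← mul_pow]; norm_num

theorem ae_eventually_partialSum_add_one_le (hmeas : ∀ i, Measurable (X i))
    (hindep : iIndepFun X μ) (hid : ∀ i, IdentDistrib (X i) (X 0) μ μ)
    (hpos : ∀ i, ∀ᵐ ω ∂μ, 0 < X i ω) :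
    ∀ᵐ ω ∂μ, ∀ᶠ m in atTop, ∀ k < (m + 2) * (Nat.log 2 m + 1),
      partialSum X k ω + 1 ≤ partialSum X (k + (Nat.log 2 m + 1)) ω := by
  obtain ⟨t, ht, hρ⟩ : ∃ t ≤ 0, mgf (X 0) μ t ≤ 1 / 16 :=
    ((eventually_le_atBot 0).and ((tendsto_mgf_atBot_of_pos (hmeas 0) (hpos 0)).eventually_le_const
      (by norm_num))).exists
  have hwindow := measure_partialSum_add_lt_le hmeas hindep hid
    (fun i => (hpos i).mono fun _ h => h.le) ht
  set bad : ℕ → Set Ω := fun m => ⋃ k ∈ Finset.range ((m + 2) * (Nat.log 2 m + 1)),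
    {ω | partialSum X (k + (Nat.log 2 m + 1)) ω < partialSum X k ω + 1}
  have hbad (m : ℕ) : μ (bad m) ≤ ENNReal.ofReal (exp (-t) * (2 / ((m : ℝ) + 1) ^ 2)) := by
    refine (measure_biUnion_finset_le _ _).trans ?_
    refine (Finset.sum_le_sum fun k _ => hwindow k _).trans ?_
    rw [Finset.sum_const, Finset.card_range, nsmul_eq_mul, ← ENNReal.ofReal_natCast,
      ← ENNReal.ofReal_mul (by positivity), mul_left_comm]
    exact ENNReal.ofReal_le_ofReal (mul_le_mul_of_nonneg_left
      (card_windows_mul_pow_le mgf_nonneg hρ m) (exp_pos _).le)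
  have hsummable : Summable fun m : ℕ => exp (-t) * (2 / ((m : ℝ) + 1) ^ 2) := by
    have : Summable fun m : ℕ => 1 / ((m : ℝ) + 1) ^ 2 := by
      exact_mod_cast (summable_nat_add_iff 1).2 (Real.summable_one_div_nat_pow.2 one_lt_two)
    simpa only [mul_one_div] using (this.mul_left 2).mul_left (exp (-t))
  filter_upwards [ae_eventually_notMem
    (ne_top_of_le_ne_top hsummable.tsum_ofReal_ne_top (ENNReal.tsum_le_tsum hbad))] with ω hω
  filter_upwards [hω] with m hm k hk
  by_contra h
  exact hm (Set.mem_biUnion (Finset.mem_range.2 hk) (not_le.1 h))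

end Window

theorem tendsto_rpow_neg_mul_log_two {δ : ℝ} (hδ : 0 < δ) :
    Tendsto (fun m : ℕ => (m : ℝ) ^ (-δ) * ((Nat.log 2 m + 1 : ℕ) : ℝ)) atTop (nhds 0) := by
  have hlog : (fun x : ℝ => logb 2 x + 1) =o[atTop] fun x => x ^ δ := by
    refine Asymptotics.IsLittleO.add ?_ ((Asymptotics.isLittleO_one_left_iff ℝ).2 ?_)
    · have h := (isLittleO_log_rpow_atTop hδ).const_mul_left (log 2)⁻¹
      simp only [inv_mul_eq_div] at h
      exact h
    · exact tendsto_norm_atTop_atTop.comp (tendsto_rpow_atTop hδ)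
  refine squeeze_zero (fun m => by positivity) (fun m => ?_)
    ((hlog.tendsto_div_nhds_zero).comp tendsto_natCast_atTop_atTop)
  rw [rpow_neg (Nat.cast_nonneg m), inv_mul_eq_div, Function.comp_apply]
  gcongr
  have := natLog_le_logb m 2
  push_cast at this ⊢
  linarith

theorem stmt_17 {Ω : Type*} [MeasurableSpace Ω] (μ : Measure Ω) [IsProbabilityMeasure μ]
    (ξ η : ℕ → Ω → ℝ) (hmeas : ∀ i, Measurable (fun ω => (ξ i ω, η i ω)))
    (hpos : ∀ i, ∀ᵐ ω ∂μ, 0 < ξ i ω ∧ 0 < η i ω)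
    (hindep : iIndepFun (fun i ω => (ξ i ω, η i ω)) μ)
    (hid : ∀ i, IdentDistrib (fun ω => (ξ i ω, η i ω)) (fun ω => (ξ 0 ω, η 0 ω)) μ μ)
    (F : ℝ → ℝ) (hF : ∀ x, F x = (μ {ω | η 0 ω ≤ x}).toReal)
    (δ : ℝ) (hδ : 0 < δ) :
    ∀ᵐ ω ∂μ, Tendsto
      (fun m : ℕ => (m : ℝ) ^ (-δ) * prwFdiff ξ F m ω) atTop (nhds 0) := by
  have hF_mono : Monotone F := fun x y hxy => by
    simp only [hF]
    exact ENNReal.toReal_mono (measure_ne_top _ _) (measure_mono fun ω h => le_trans h hxy)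
  have hF_le (x : ℝ) : F x ≤ 1 := by
    rw [hF, ← measureReal_def]
    exact measureReal_le_one
  have hξ_pos (i : ℕ) : ∀ᵐ ω ∂μ, 0 < ξ i ω := (hpos i).mono fun _ h => h.1
  filter_upwards [ae_all_iff.2 hξ_pos, ae_eventually_partialSum_add_one_le (fun i => (hmeas i).fst)
    (hindep.comp (fun _ p => p.1) fun _ => measurable_fst) (fun i => (hid i).comp measurable_fst)
    hξ_pos] with ω hω hgap
  have hS : Monotone (partialSum ξ · ω) := monotone_nat_of_le_succ fun k => by
    simp [partialSum, Finset.sum_range_succ, (hω k).le]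
  have hbound : ∀ᶠ m in atTop,
      0 ≤ prwFdiff ξ F m ω ∧ prwFdiff ξ F m ω ≤ ((Nat.log 2 m + 1 : ℕ) : ℝ) :=
    hgap.mono fun m hm => prwFdiff_nonneg_and_le hF_mono (fun x => by rw [hF]; positivity) hF_le hS
      fun k hk => add_one_le_of_forall_lt_mul hS (by simp [partialSum]) (Nat.succ_pos _) hm
        (by push_cast; linarith)
  refine squeeze_zero' ?_ ?_ (tendsto_rpow_neg_mul_log_two hδ)
  · filter_upwards [hbound] with m hm
    exact mul_nonneg (by positivity) hm.1
  · filter_upwards [hbound] with m hm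
    exact mul_le_mul_of_nonneg_left hm.2 (by positivity)
end
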